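/- Let (V, Q) be an FBAS with V finite, let T be its top tier, and suppose T is nonempty. For every i ∈ T, the Shapley-Shubik power index of i computed in the game on the full player set V equals the Shapley-Shubik power index of i computed in the game restricted to the player set T; that is, Σ over S ⊆ V with i ∈ S, S containing a quorum, and S \ {i} containing no quorum, of (|S| − 1)!(|V| − |S|)!/|V|! equals Σ over S ⊆ T with i ∈ S, S containing a quorum, and S \ {i} containing no quorum, of (|S| − 1)!(|T| − |S|)!/|T|!. -/
import Mathlib


open scoped Classical

variable {α : Type*} [DecidableEq α]

/-- `(V, Q)` is an FBAS: `Q` assigns to each node `i ∈ V` a nonempty collection of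
quorum slices, each slice being a subset of `V` containing `i` itself. -/
def IsFBAS (V : Finset α) (Q : α → Finset (Finset α)) : Prop :=
  ∀ i ∈ V, (Q i).Nonempty ∧ ∀ q ∈ Q i, i ∈ q ∧ q ⊆ V

/-- A quorum is a nonempty `U ⊆ V` containing a slice of each of its members. -/
def IsQuorum (V : Finset α) (Q : α → Finset (Finset α)) (U : Finset α) : Prop :=
  U.Nonempty ∧ U ⊆ V ∧ ∀ i ∈ U, ∃ q ∈ Q i, q ⊆ U

/-- A minimal quorum is a quorum no proper subset of which is a quorum. -/
def IsMinimalQuorum (V : Finset α) (Q : α → Finset (Finset α)) (U : Finset α) : Prop :=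
  IsQuorum V Q U ∧ ∀ U' ⊂ U, ¬ IsQuorum V Q U'

/-- A coalition `S` is winning iff it contains a quorum. -/
def ContainsQuorum (V : Finset α) (Q : α → Finset (Finset α)) (S : Finset α) : Prop :=
  ∃ U, IsQuorum V Q U ∧ U ⊆ S

/-- Node `i` is critical for coalition `S` if `i ∈ S`, `S` contains a quorum,
but `S \ {i}` contains no quorum. -/
def Critical (V : Finset α) (Q : α → Finset (Finset α)) (i : α) (S : Finset α) : Prop :=
  i ∈ S ∧ ContainsQuorum V Q S ∧ ¬ ContainsQuorum V Q (S.erase i)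

/-- The characteristic function of the FBAS game: `v S = 1` if `S` contains a quorum,
`0` otherwise. -/
noncomputable def charFunc (V : Finset α) (Q : α → Finset (Finset α)) (S : Finset α) : ℚ :=
  if ContainsQuorum V Q S then 1 else 0

/-- The Shapley-Shubik power index of node `i`:
`φ_i = Σ_{S ∈ W^i} (|S| - 1)! (n - |S|)! / n!` with `n = |V|`. -/
noncomputable def sspi (V : Finset α) (Q : α → Finset (Finset α)) (i : α) : ℚ :=
  ∑ S ∈ V.powerset.filter (fun S => Critical V Q i S),
    (Nat.factorial (S.card - 1) * Nat.factorial (V.card - S.card) : ℚ) /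
      Nat.factorial V.card

/-- The top tier of an FBAS: the union of all minimal quorums. -/
noncomputable def topTier (V : Finset α) (Q : α → Finset (Finset α)) : Finset α :=
  V.filter (fun k => ∃ U, IsMinimalQuorum V Q U ∧ k ∈ U)

/- ========== auxiliary lemmas ========== -/

lemma frac_id (x y : ℕ) :
    ((x.factorial * (y+1).factorial : ℚ) + (x+1).factorial * y.factorial) / (x+y+2).factorial
      = (x.factorial * y.factorial : ℚ) / (x+y+1).factorial := by
  have h1 : (x+y+2).factorial = (x+y+2) * (x+y+1).factorial := rfl
  have h2 : (y+1).factorial = (y+1) * y.factorial := rfl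
  have h3 : (x+1).factorial = (x+1) * x.factorial := rfl
  rw [h1, h2, h3]
  have hn : ((x+y+1).factorial : ℚ) ≠ 0 := by exact_mod_cast (x+y+1).factorial_ne_zero
  have hn2 : ((x:ℚ)+y+2) ≠ 0 := by positivity
  push_cast
  field_simp
  ring

lemma key_sum (a c m : ℕ) :
    ∑ b ∈ Finset.range (m+1),
      (m.choose b : ℚ) * (a+b).factorial * (c + (m - b)).factorial / (a+c+m+1).factorial
    = (a.factorial * c.factorial : ℚ) / (a+c+1).factorial := by
  induction m with
  | zero => simp
  | succ m ih =>
    rw [← ih]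
    rw [Finset.sum_range_succ']
    have step : ∀ b ∈ Finset.range (m+1),
        (((m+1).choose (b+1) : ℚ) * (a+(b+1)).factorial *
            (c + (m + 1 - (b+1))).factorial / (a+c+(m+1)+1).factorial)
        = ((m.choose b : ℚ) * (a+b+1).factorial * (c + (m - b)).factorial / (a+c+m+2).factorial)
          + ((m.choose (b+1) : ℚ) * (a+(b+1)).factorial * (c + (m + 1 - (b+1))).factorial / (a+c+m+2).factorial) := by
      intro b hb
      rw [Nat.choose_succ_succ m b]
      have h1 : m + 1 - (b+1) = m - b := by omega
      have h2 : a + (b+1) = a + b + 1 := by ring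
      have h3 : a + c + (m+1) + 1 = a + c + m + 2 := by ring
      rw [h1, h2, h3]
      push_cast
      ring
    rw [Finset.sum_congr rfl step, Finset.sum_add_distrib]
    have hF : (∑ b ∈ Finset.range (m+1),
          (m.choose (b+1) : ℚ) * (a+(b+1)).factorial * (c + (m + 1 - (b+1))).factorial / (a+c+m+2).factorial)
        + ((m+1).choose 0 : ℚ) * (a+0).factorial * (c + (m+1-0)).factorial / (a+c+(m+1)+1).factorial
        = ∑ b ∈ Finset.range (m+1),
          (m.choose b : ℚ) * (a+b).factorial * (c + (m + 1 - b)).factorial / (a+c+m+2).factorial := by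
      have e1 := Finset.sum_range_succ'
        (fun b => (m.choose b : ℚ) * (a+b).factorial * (c + (m + 1 - b)).factorial / (a+c+m+2).factorial) (m+1)
      have e2 := Finset.sum_range_succ
        (fun b => (m.choose b : ℚ) * (a+b).factorial * (c + (m + 1 - b)).factorial / (a+c+m+2).factorial) (m+1)
      simp only [Nat.choose_succ_self, Nat.cast_zero, zero_mul, zero_div, add_zero] at e2
      rw [show a+c+(m+1)+1 = a+c+m+2 from by ring, ← e2, e1]
      norm_num
    rw [add_assoc, hF, ← Finset.sum_add_distrib]
    apply Finset.sum_congr rfl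
    intro b hb
    have hbm : b ≤ m := by simpa using Nat.lt_succ_iff.mp (Finset.mem_range.mp hb)
    obtain ⟨d, hd⟩ : ∃ d, m = b + d := ⟨m - b, by omega⟩
    subst hd
    have h1 : b + d + 1 - b = d + 1 := by omega
    have h2 : b + d - b = d := by omega
    rw [h1, h2]
    have hx : a + c + (b+d) + 2 = (a+b) + (c+d) + 2 := by ring
    have hx2 : a + c + (b+d) + 1 = (a+b) + (c+d) + 1 := by ring
    have hy : c + (d+1) = (c+d) + 1 := by ring
    rw [hx, hx2, hy]
    linear_combination ((b+d).choose b : ℚ) * frac_id (a+b) (c+d)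

lemma exists_minimal_quorum_subset {V : Finset α} {Q : α → Finset (Finset α)} :
    ∀ U : Finset α, IsQuorum V Q U → ∃ W, IsMinimalQuorum V Q W ∧ W ⊆ U := by
  intro U
  induction U using Finset.strongInduction with
  | _ U ih =>
    intro hU
    by_cases h : ∀ U' ⊂ U, ¬ IsQuorum V Q U'
    · exact ⟨U, ⟨hU, h⟩, Finset.Subset.refl U⟩
    · push_neg at h
      obtain ⟨U', hsub, hq⟩ := h
      obtain ⟨W, hW, hWs⟩ := ih U' hsub hq
      exact ⟨W, hW, hWs.trans hsub.subset⟩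

lemma minimal_subset_topTier {V : Finset α} {Q : α → Finset (Finset α)} {U : Finset α}
    (h : IsMinimalQuorum V Q U) : U ⊆ topTier V Q :=
  fun k hk => Finset.mem_filter.2 ⟨h.1.2.1 hk, ⟨U, h, hk⟩⟩

lemma containsQuorum_inter {V : Finset α} {Q : α → Finset (Finset α)} (S : Finset α) :
    ContainsQuorum V Q S ↔ ContainsQuorum V Q (S ∩ topTier V Q) := by
  constructor
  · rintro ⟨U, hU, hUS⟩
    obtain ⟨W, hW, hWU⟩ := exists_minimal_quorum_subset U hU
    exact ⟨W, hW.1, Finset.subset_inter (hWU.trans hUS) (minimal_subset_topTier hW)⟩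
  · rintro ⟨U, hU, hUS⟩
    exact ⟨U, hU, hUS.trans Finset.inter_subset_left⟩

lemma critical_inter {V : Finset α} {Q : α → Finset (Finset α)} {i : α}
    (hiT : i ∈ topTier V Q) (S : Finset α) :
    Critical V Q i S ↔ Critical V Q i (S ∩ topTier V Q) := by
  unfold Critical
  rw [← Finset.erase_inter]
  constructor
  · rintro ⟨h1, h2, h3⟩
    exact ⟨Finset.mem_inter.2 ⟨h1, hiT⟩, (containsQuorum_inter S).1 h2,
      fun hc => h3 ((containsQuorum_inter (S.erase i)).2 hc)⟩
  · rintro ⟨h1, h2, h3⟩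
    exact ⟨(Finset.mem_inter.1 h1).1, (containsQuorum_inter S).2 h2,
      fun hc => h3 ((containsQuorum_inter (S.erase i)).1 hc)⟩

/-- for every top tier node `i`, the Shapley-Shubik power index
computed in the game on the full player set `V` equals the one computed in the game
restricted to the player set `T`. -/
theorem sspi_on_V_eq_sspi_on_top_tier
    (V : Finset α) (Q : α → Finset (Finset α)) (hFBAS : IsFBAS V Q)
    (hT : (topTier V Q).Nonempty)
    (i : α) (hi : i ∈ topTier V Q) :
    ∑ S ∈ V.powerset.filter (fun S => Critical V Q i S),
      (Nat.factorial (S.card - 1) * Nat.factorial (V.card - S.card) : ℚ) /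
        Nat.factorial V.card
    = ∑ S ∈ (topTier V Q).powerset.filter (fun S => Critical V Q i S),
        (Nat.factorial (S.card - 1) * Nat.factorial ((topTier V Q).card - S.card) : ℚ) /
          Nat.factorial (topTier V Q).card := by
  classical
  set T := topTier V Q with hTdef
  have hTV : T ⊆ V := Finset.filter_subset _ _
  set t := T.card with htdef
  set n := V.card with hndef
  set m := (V \ T).card with hmdef
  have htn : t ≤ n := Finset.card_le_card hTV
  have hm : m = n - t := Finset.card_sdiff_of_subset hTV
  -- properties of pieces
  have hsplit : ∀ {A B : Finset α}, A ⊆ T → B ⊆ V \ T →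
      (A ∪ B) ∩ T = A ∧ (A ∪ B) \ T = B := by
    intro A B hA hB
    have hB' : ∀ x ∈ B, x ∉ T := fun x hx => (Finset.mem_sdiff.1 (hB hx)).2
    constructor
    · ext x
      simp only [Finset.mem_inter, Finset.mem_union]
      constructor
      · rintro ⟨h | h, ht⟩
        · exact h
        · exact absurd ht (hB' x h)
      · intro h; exact ⟨Or.inl h, hA h⟩
    · ext x
      simp only [Finset.mem_sdiff, Finset.mem_union]
      constructor
      · rintro ⟨h | h, ht⟩
        · exact absurd (hA h) ht
        · exact h
      · intro h; exact ⟨Or.inr h, hB' x h⟩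
  -- the bijection
  have hbij :
      ∑ S ∈ V.powerset.filter (fun S => Critical V Q i S),
        (Nat.factorial (S.card - 1) * Nat.factorial (n - S.card) : ℚ) / Nat.factorial n
      = ∑ p ∈ (T.powerset.filter (fun S => Critical V Q i S)) ×ˢ (V \ T).powerset,
        (Nat.factorial ((p.1 ∪ p.2).card - 1) * Nat.factorial (n - (p.1 ∪ p.2).card) : ℚ) /
          Nat.factorial n := by
    apply Finset.sum_nbij' (fun S => (S ∩ T, S \ T)) (fun p => p.1 ∪ p.2)
    · intro S hS
      obtain ⟨hSV, hcrit⟩ := Finset.mem_filter.1 hS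
      rw [Finset.mem_powerset] at hSV
      refine Finset.mem_product.2 ⟨Finset.mem_filter.2 ⟨Finset.mem_powerset.2
        Finset.inter_subset_right, (critical_inter hi S).1 hcrit⟩, Finset.mem_powerset.2 ?_⟩
      exact fun x hx => by
        have := Finset.mem_sdiff.1 hx
        exact Finset.mem_sdiff.2 ⟨hSV this.1, this.2⟩
    · rintro ⟨A, B⟩ hp
      obtain ⟨hA, hB⟩ := Finset.mem_product.1 hp
      obtain ⟨hAT, hcrit⟩ := Finset.mem_filter.1 hA
      rw [Finset.mem_powerset] at hAT
      rw [Finset.mem_powerset] at hB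
      obtain ⟨e1, e2⟩ := hsplit hAT hB
      refine Finset.mem_filter.2 ⟨Finset.mem_powerset.2 ?_, ?_⟩
      · exact Finset.union_subset (hAT.trans hTV) (hB.trans Finset.sdiff_subset)
      · rw [critical_inter hi (A ∪ B), e1]; exact hcrit
    · intro S hS
      ext x
      simp only [Finset.mem_union, Finset.mem_inter, Finset.mem_sdiff]
      tauto
    · rintro ⟨A, B⟩ hp
      obtain ⟨hA, hB⟩ := Finset.mem_product.1 hp
      obtain ⟨hAT, _⟩ := Finset.mem_filter.1 hA
      rw [Finset.mem_powerset] at hAT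
      rw [Finset.mem_powerset] at hB
      obtain ⟨e1, e2⟩ := hsplit hAT hB
      simp [e1, e2]
    · intro S hS
      have : S ∩ T ∪ S \ T = S := by
        ext x
        simp only [Finset.mem_union, Finset.mem_inter, Finset.mem_sdiff]
        tauto
      rw [this]
  rw [hbij, Finset.sum_product]
  apply Finset.sum_congr rfl
  intro A hA
  obtain ⟨hAT, hcrit⟩ := Finset.mem_filter.1 hA
  rw [Finset.mem_powerset] at hAT
  have hiA : i ∈ A := hcrit.1
  have ha1 : 1 ≤ A.card := Finset.card_pos.2 ⟨i, hiA⟩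
  have hat : A.card ≤ t := Finset.card_le_card hAT
  set a := A.card with hadef
  -- card of unions
  have hcard : ∀ B ∈ (V \ T).powerset, (A ∪ B).card = a + B.card := by
    intro B hB
    rw [Finset.mem_powerset] at hB
    have hdisj : Disjoint A B := Finset.disjoint_left.2
      (fun x hx hxB => (Finset.mem_sdiff.1 (hB hxB)).2 (hAT hx))
    rw [Finset.card_union_of_disjoint hdisj]
  have hstep1 :
      ∑ B ∈ (V \ T).powerset,
        (Nat.factorial ((A ∪ B).card - 1) * Nat.factorial (n - (A ∪ B).card) : ℚ) / Nat.factorial n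
      = ∑ B ∈ (V \ T).powerset,
        (fun b => (Nat.factorial (a + b - 1) * Nat.factorial (n - (a + b)) : ℚ) / Nat.factorial n) B.card := by
    apply Finset.sum_congr rfl
    intro B hB
    rw [hcard B hB]
  rw [hstep1, Finset.sum_powerset (V \ T)
    (fun B => (fun b => (Nat.factorial (a + b - 1) * Nat.factorial (n - (a + b)) : ℚ) / Nat.factorial n) B.card)]
  simp only
  have hstep2 : ∀ j ∈ Finset.range (m + 1),
      (∑ B ∈ Finset.powersetCard j (V \ T),
        (Nat.factorial (a + B.card - 1) * Nat.factorial (n - (a + B.card)) : ℚ) / Nat.factorial n)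
      = (m.choose j : ℚ) * ((a-1) + j).factorial * ((t - a) + (m - j)).factorial / ((a-1)+(t-a)+m+1).factorial := by
    intro j hj
    have hjm : j ≤ m := by have := Finset.mem_range.1 hj; omega
    have hnt : n = t + m := by omega
    have e := Finset.sum_powersetCard j (V \ T)
      (fun b => (Nat.factorial (a + b - 1) * Nat.factorial (n - (a + b)) : ℚ) / Nat.factorial n)
    rw [e, ← hmdef]
    have e1 : a + j - 1 = (a - 1) + j := by omega
    have e2 : n - (a + j) = (t - a) + (m - j) := by omega
    have e3 : n = (a - 1) + (t - a) + m + 1 := by omega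
    rw [e1, e2, e3, nsmul_eq_mul]
    ring
  rw [Finset.sum_congr rfl hstep2, key_sum (a-1) (t-a) m,
    show (a-1)+(t-a)+1 = t from by omega]
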